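/- arXiv:math-ph/0603034 — 2 statements merged into one kernel-verified Lean document; each statement's English description precedes it below -/
import Mathlib

section
/- Let Ω be a self-adjoint operator on a finite-dimensional complex inner product space H and S a subspace of H. Then the maximal dimension of an eigenspace of the restriction of Ω to the invariant subspace O_Ω(S) is at most dim S. -/
noncomputable section

/-- The smallest `Ω`-invariant subspace containing a subset `S`. -/
def orbit {H : Type*} [NormedAddCommGroup H] [InnerProductSpace ℂ H]
    (Ω : H →ₗ[ℂ] H) (S : Set H) : Submodule ℂ H :=
  sInf {W : Submodule ℂ H | S ⊆ (W : Set H) ∧ ∀ x ∈ W, Ω x ∈ W}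

theorem orbit_invariant {H : Type*} [NormedAddCommGroup H] [InnerProductSpace ℂ H]
    (Ω : H →ₗ[ℂ] H) (S : Set H) : ∀ x ∈ orbit Ω S, Ω x ∈ orbit Ω S := by
  intro x hx
  simp only [orbit, Submodule.mem_sInf] at hx ⊢
  intro W hW
  exact hW.2 x (hx W hW)

/-- For a self-adjoint operator `Ω` on a finite-dimensional complex inner product space and a
subspace `S`, every eigenspace of the restriction of `Ω` to the invariant subspace `O_Ω(S)`
has dimension at most `dim S`. -/
theorem multiplicity_restriction_orbit_le_dim
    {H : Type*} [NormedAddCommGroup H] [InnerProductSpace ℂ H] [FiniteDimensional ℂ H]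
    (Ω : H →ₗ[ℂ] H) (hΩ : Ω.IsSymmetric) (S : Submodule ℂ H) (μ : ℂ) :
    Module.finrank ℂ
        (Module.End.eigenspace (Ω.restrict (orbit_invariant Ω (S : Set H))) μ)
      ≤ Module.finrank ℂ S := by
  set O := orbit Ω (S : Set H) with hO
  set E := Module.End.eigenspace (Ω.restrict (orbit_invariant Ω (S : Set H))) μ with hE
  set E' := E.map O.subtype with hE'
  have hdim : Module.finrank ℂ E = Module.finrank ℂ E' :=
    (Submodule.finrank_map_subtype_eq O E).symm
  by_contra hlt
  push_neg at hlt
  rw [hdim] at hlt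
  -- E' ⊓ Sᗮ ≠ ⊥
  have hne : E' ⊓ Sᗮ ≠ ⊥ := by
    intro hbot
    have h1 := Submodule.finrank_sup_add_finrank_inf_eq E' Sᗮ
    rw [hbot, finrank_bot, add_zero] at h1
    have h2 : Module.finrank ℂ ↥(E' ⊔ Sᗮ) ≤ Module.finrank ℂ H := Submodule.finrank_le _
    have h3 := Submodule.finrank_add_finrank_orthogonal (K := S)
    omega
  obtain ⟨v, hv, hv0⟩ := Submodule.exists_mem_ne_zero_of_ne_bot hne
  obtain ⟨hvE', hvS⟩ := Submodule.mem_inf.mp hv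
  obtain ⟨w, hwE, hwv⟩ := Submodule.mem_map.mp hvE'
  have hvO : v ∈ O := by rw [← hwv]; exact w.2
  have hΩv : Ω v = μ • v := by
    subst hwv
    have := Module.End.mem_eigenspace_iff.mp hwE
    simpa [LinearMap.restrict_coe_apply] using congrArg O.subtype this
  have key : O ≤ (ℂ ∙ v)ᗮ := by
    apply sInf_le
    constructor
    · intro s hs
      rw [SetLike.mem_coe, Submodule.mem_orthogonal_singleton_iff_inner_right]
      exact (Submodule.mem_orthogonal' S v).mp hvS s hs
    · intro x hx
      rw [Submodule.mem_orthogonal_singleton_iff_inner_right] at hx ⊢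
      rw [← hΩ v x, hΩv, inner_smul_left, hx, mul_zero]
  have : v = 0 := by
    have := Submodule.mem_orthogonal_singleton_iff_inner_right.mp (key hvO)
    simpa [inner_self_eq_zero] using this
  exact hv0 this
end
end

section
/- Let H = H₁ ⊕ H₂ (orthogonal direct sum of finite-dimensional complex inner product spaces), and let Ω = [[Ω₁, Γ],[Γ†, Ω₂]] be self-adjoint (so Ω₁, Ω₂ self-adjoint and Γ : H₂ → H₁ linear). Suppose H₁ contains no nonzero Ω-invariant subspace except as forced, i.e. H₁ = O_{Ω₁}(range Γ). Then the multiplicity of every eigenvalue of Ω restricted to O_Ω(H₁) is at most 2·rank Γ. -/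
noncomputable section

open LinearMap Module

variable (H₁ H₂ : Type*)
  [NormedAddCommGroup H₁] [InnerProductSpace ℂ H₁] [FiniteDimensional ℂ H₁]
  [NormedAddCommGroup H₂] [InnerProductSpace ℂ H₂] [FiniteDimensional ℂ H₂]

/-- The orthogonal direct sum `H = H₁ ⊕ H₂`. -/
abbrev DirSum := WithLp 2 (H₁ × H₂)

/-- Isometric embedding of `H₁` into `H₁ ⊕ H₂`. -/
def emb1 : H₁ →ₗ[ℂ] DirSum H₁ H₂ :=
  (WithLp.linearEquiv 2 ℂ (H₁ × H₂)).symm.toLinearMap ∘ₗ LinearMap.inl ℂ H₁ H₂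

/-- Isometric embedding of `H₂` into `H₁ ⊕ H₂`. -/
def emb2 : H₂ →ₗ[ℂ] DirSum H₁ H₂ :=
  (WithLp.linearEquiv 2 ℂ (H₁ × H₂)).symm.toLinearMap ∘ₗ LinearMap.inr ℂ H₁ H₂

/-- Projection of `H₁ ⊕ H₂` onto the first coordinate. -/
def proj1 : DirSum H₁ H₂ →ₗ[ℂ] H₁ :=
  LinearMap.fst ℂ H₁ H₂ ∘ₗ (WithLp.linearEquiv 2 ℂ (H₁ × H₂)).toLinearMap

/-- Projection of `H₁ ⊕ H₂` onto the second coordinate. -/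
def proj2 : DirSum H₁ H₂ →ₗ[ℂ] H₂ :=
  LinearMap.snd ℂ H₁ H₂ ∘ₗ (WithLp.linearEquiv 2 ℂ (H₁ × H₂)).toLinearMap

/-- The copy of `H₁` inside `H₁ ⊕ H₂`. -/
def sub1 : Submodule ℂ (DirSum H₁ H₂) := LinearMap.range (emb1 H₁ H₂)

/-- The copy of `H₂` inside `H₁ ⊕ H₂`. -/
def sub2 : Submodule ℂ (DirSum H₁ H₂) := LinearMap.range (emb2 H₁ H₂)

variable {H₁ H₂}

/-- The block operator `Ω = [[Ω₁, Γ], [Γ†, Ω₂]]` acting on `H₁ ⊕ H₂` by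
`Ω(v₁, v₂) = (Ω₁ v₁ + Γ v₂, Γ† v₁ + Ω₂ v₂)`. -/
def blockOp (Ω₁ : H₁ →ₗ[ℂ] H₁) (Ω₂ : H₂ →ₗ[ℂ] H₂) (Γ : H₂ →ₗ[ℂ] H₁) :
    DirSum H₁ H₂ →ₗ[ℂ] DirSum H₁ H₂ :=
  emb1 H₁ H₂ ∘ₗ (Ω₁ ∘ₗ proj1 H₁ H₂ + Γ ∘ₗ proj2 H₁ H₂) +
    emb2 H₁ H₂ ∘ₗ (LinearMap.adjoint Γ ∘ₗ proj1 H₁ H₂ + Ω₂ ∘ₗ proj2 H₁ H₂)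

/- ---------- auxiliary lemmas ---------- -/

lemma orbit_le {H : Type*} [NormedAddCommGroup H] [InnerProductSpace ℂ H]
    {Ω : H →ₗ[ℂ] H} {S : Set H} {W : Submodule ℂ H}
    (h1 : S ⊆ (W : Set H)) (h2 : ∀ x ∈ W, Ω x ∈ W) : orbit Ω S ≤ W :=
  sInf_le ⟨h1, h2⟩

/-- If `y` is an eigenvector of a symmetric `Ω` orthogonal to `S`, then it is orthogonal
to the whole orbit of `S`. -/
lemma inner_eq_zero_of_mem_orbit {H : Type*} [NormedAddCommGroup H] [InnerProductSpace ℂ H]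
    {Ω : H →ₗ[ℂ] H} (hΩ : Ω.IsSymmetric) {S : Set H} {y : H} {μ : ℂ}
    (hy : Ω y = μ • y) (h : ∀ s ∈ S, inner (𝕜 := ℂ) y s = 0) :
    ∀ x ∈ orbit Ω S, inner (𝕜 := ℂ) y x = 0 := by
  let W : Submodule ℂ H :=
    { carrier := {x | inner (𝕜 := ℂ) y x = 0}
      add_mem' := fun {a b} ha hb => by
        simp only [Set.mem_setOf_eq] at *
        rw [inner_add_right, ha, hb, add_zero]
      zero_mem' := by simp
      smul_mem' := fun c a ha => by
        simp only [Set.mem_setOf_eq] at *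
        rw [inner_smul_right, ha, mul_zero] }
  have hW : ∀ x ∈ W, Ω x ∈ W := by
    intro x hx
    show inner (𝕜 := ℂ) y (Ω x) = 0
    rw [← hΩ y x, hy, inner_smul_left, hx, mul_zero]
  exact fun x hx => orbit_le (fun s hs => h s hs) hW hx

/-- The adjoint has the same rank. -/
lemma finrank_range_adjoint (Γ : H₂ →ₗ[ℂ] H₁) :
    finrank ℂ (LinearMap.range (LinearMap.adjoint Γ)) = finrank ℂ (LinearMap.range Γ) := by
  have hker : LinearMap.ker (LinearMap.adjoint Γ) = (LinearMap.range Γ)ᗮ := by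
    ext x
    simp only [LinearMap.mem_ker, Submodule.mem_orthogonal]
    constructor
    · rintro hx u ⟨v, rfl⟩
      rw [← LinearMap.adjoint_inner_right, hx, inner_zero_right]
    · intro hx
      rw [← inner_self_eq_zero (𝕜 := ℂ)]
      have := hx (Γ (LinearMap.adjoint Γ x)) ⟨_, rfl⟩
      rw [← LinearMap.adjoint_inner_right] at this
      simpa using this
  have h1 := LinearMap.finrank_range_add_finrank_ker (LinearMap.adjoint Γ)
  have h2 := Submodule.finrank_add_finrank_orthogonal (K := LinearMap.range Γ)
  rw [hker] at h1
  omega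

lemma blockOp_fst (Ω₁ : H₁ →ₗ[ℂ] H₁) (Ω₂ : H₂ →ₗ[ℂ] H₂) (Γ : H₂ →ₗ[ℂ] H₁)
    (z : DirSum H₁ H₂) : (blockOp Ω₁ Ω₂ Γ z).fst = Ω₁ z.fst + Γ z.snd := by
  show Ω₁ z.fst + Γ z.snd + 0 = _
  rw [add_zero]

lemma blockOp_snd (Ω₁ : H₁ →ₗ[ℂ] H₁) (Ω₂ : H₂ →ₗ[ℂ] H₂) (Γ : H₂ →ₗ[ℂ] H₁)
    (z : DirSum H₁ H₂) : (blockOp Ω₁ Ω₂ Γ z).snd = LinearMap.adjoint Γ z.fst + Ω₂ z.snd := by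
  show 0 + (LinearMap.adjoint Γ z.fst + Ω₂ z.snd) = _
  rw [zero_add]

lemma blockOp_symmetric (Ω₁ : H₁ →ₗ[ℂ] H₁) (hΩ₁ : Ω₁.IsSymmetric)
    (Ω₂ : H₂ →ₗ[ℂ] H₂) (hΩ₂ : Ω₂.IsSymmetric) (Γ : H₂ →ₗ[ℂ] H₁) :
    (blockOp Ω₁ Ω₂ Γ).IsSymmetric := by
  intro x y
  rw [WithLp.prod_inner_apply, WithLp.prod_inner_apply]
  simp only [WithLp.ofLp_fst, WithLp.ofLp_snd]
  rw [blockOp_fst, blockOp_snd,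
    blockOp_fst, blockOp_snd,
    inner_add_left, inner_add_left, inner_add_right, inner_add_right,
    hΩ₁ x.fst y.fst, hΩ₂ x.snd y.snd, LinearMap.adjoint_inner_left,
    ← LinearMap.adjoint_inner_right]
  ring

/-- If `H₁ = O_{Ω₁}(range Γ)` (no decoupled observable states), then every eigenvalue of the
block operator `Ω = [[Ω₁, Γ], [Γ†, Ω₂]]` restricted to the minimal extension `O_Ω(H₁)` has
multiplicity at most `2 · rank Γ` (and at most `dim H₁`). -/
theorem multiplicity_minimal_extension_le
    (Ω₁ : H₁ →ₗ[ℂ] H₁) (hΩ₁ : Ω₁.IsSymmetric)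
    (Ω₂ : H₂ →ₗ[ℂ] H₂) (hΩ₂ : Ω₂.IsSymmetric)
    (Γ : H₂ →ₗ[ℂ] H₁)
    (hmin : orbit Ω₁ (Set.range Γ) = ⊤) (μ : ℂ) :
    finrank ℂ (Module.End.eigenspace
        ((blockOp Ω₁ Ω₂ Γ).restrict
          (orbit_invariant (blockOp Ω₁ Ω₂ Γ) (sub1 H₁ H₂ : Set (DirSum H₁ H₂)))) μ)
      ≤ 2 * finrank ℂ (LinearMap.range Γ) := by
  set Ω := blockOp Ω₁ Ω₂ Γ with hΩdef
  have hΩ : Ω.IsSymmetric := blockOp_symmetric Ω₁ hΩ₁ Ω₂ hΩ₂ Γ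
  set O : Submodule ℂ (DirSum H₁ H₂) := orbit Ω (sub1 H₁ H₂ : Set (DirSum H₁ H₂)) with hOdef
  set T := Ω.restrict (orbit_invariant Ω (sub1 H₁ H₂ : Set (DirSum H₁ H₂))) with hTdef
  set E := Module.End.eigenspace T μ with hEdef
  -- inclusion of the eigenspace into the ambient space
  let incl : E →ₗ[ℂ] DirSum H₁ H₂ := O.subtype ∘ₗ E.subtype
  -- the key map into range Γ† × range Γ
  let g : E →ₗ[ℂ] ↥(LinearMap.range (LinearMap.adjoint Γ)) × ↥(LinearMap.range Γ) :=
    LinearMap.prod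
      (LinearMap.codRestrict (LinearMap.range (LinearMap.adjoint Γ))
        (LinearMap.adjoint Γ ∘ₗ proj1 H₁ H₂ ∘ₗ incl) (fun x => ⟨_, rfl⟩))
      (LinearMap.codRestrict (LinearMap.range Γ)
        (Γ ∘ₗ proj2 H₁ H₂ ∘ₗ incl) (fun x => ⟨_, rfl⟩))
  have hginj : Function.Injective g := by
    rw [← LinearMap.ker_eq_bot, LinearMap.ker_eq_bot']
    intro x hx
    have h1 : LinearMap.adjoint Γ (incl x).fst = 0 := congrArg Subtype.val (congrArg Prod.fst hx)
    have h2 : Γ (incl x).snd = 0 := congrArg Subtype.val (congrArg Prod.snd hx)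
    set v : DirSum H₁ H₂ := incl x with hv
    -- the eigenvalue equation in the ambient space
    have heig : Ω v = μ • v := by
      have hx' : T x.val = μ • x.val := Module.End.mem_eigenspace_iff.mp x.2
      have := congrArg Subtype.val hx'
      simp [hTdef, LinearMap.restrict_apply] at this
      exact this
    have heig1 : Ω₁ v.fst + Γ v.snd = μ • v.fst := by
      have := congrArg WithLp.fst heig
      rwa [blockOp_fst] at this
    have heig1' : Ω₁ v.fst = μ • v.fst := by rw [← heig1, h2, add_zero]
    -- first component vanishes
    have hv1 : v.fst = 0 := by
      have horth : ∀ z ∈ orbit Ω₁ (Set.range Γ), inner (𝕜 := ℂ) v.fst z = 0 := by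
        refine inner_eq_zero_of_mem_orbit hΩ₁ heig1' ?_
        rintro s ⟨u, rfl⟩
        rw [← LinearMap.adjoint_inner_left, h1, inner_zero_left]
      have := horth v.fst (by rw [hmin]; trivial)
      exact inner_self_eq_zero.mp this
    -- the whole vector vanishes
    have hv0 : v = 0 := by
      have horth : ∀ z ∈ O, inner (𝕜 := ℂ) v z = 0 := by
        refine inner_eq_zero_of_mem_orbit hΩ heig ?_
        rintro s ⟨w, rfl⟩
        have : inner (𝕜 := ℂ) v (emb1 H₁ H₂ w)
            = inner (𝕜 := ℂ) v.fst w + inner (𝕜 := ℂ) v.snd (0 : H₂) := rfl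
        rw [this, hv1, inner_zero_left, inner_zero_right, add_zero]
      have := horth v x.val.2
      exact inner_self_eq_zero.mp this
    ext
    exact hv0
  calc finrank ℂ E
      ≤ finrank ℂ (↥(LinearMap.range (LinearMap.adjoint Γ)) × ↥(LinearMap.range Γ)) :=
        LinearMap.finrank_le_finrank_of_injective hginj
    _ = finrank ℂ (LinearMap.range (LinearMap.adjoint Γ)) + finrank ℂ (LinearMap.range Γ) :=
        Module.finrank_prod
    _ = 2 * finrank ℂ (LinearMap.range Γ) := by rw [_root_.finrank_range_adjoint]; ring
end
end
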